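/- arXiv:1604.03317 — 3 statements merged into one kernel-verified Lean document; each statement's English description precedes it below -/
import Mathlib

section
/- (Weak duality for the dual representation of Bermudan prices.) Let (𝒢_k)_{0≤k≤n} be a filtration on (Ω, ℱ, ℙ), let (Z_k)_{0≤k≤n} be adapted real random variables with max_{0≤k≤n}|Z_k| integrable, let (M_k)_{0≤k≤n} be an integrable (𝒢_k)-martingale with M_0 = 0, and let τ be a (𝒢_k)-stopping time with values in {0, …, n}. Then E[Z_τ] ≤ E[max_{0≤k≤n}(Z_k − M_k)]; consequently sup_τ E[Z_τ] ≤ inf_M E[max_{0≤k≤n}(Z_k − M_k)], the supremum being over all stopping times with values in {0,…,n} and the infimum over all integrable martingales vanishing at 0. -/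
open MeasureTheory ProbabilityTheory

/-!
By optional sampling, a martingale started at `0` has mean zero at every bounded stopping time,
so `E[Z_τ] = E[Z_τ - M_τ]`, and `Z_τ - M_τ` is pointwise at most `max_k (Z_k - M_k)`. Taking
the supremum over `τ` and the infimum over `M` gives the second claim.
-/

namespace MeasureTheory

variable {Ω : Type*} {m0 : MeasurableSpace Ω} {μ : Measure Ω}

theorem Integrable.finset_sup' {ι : Type*} {s : Finset ι} (hs : s.Nonempty)
    {f : ι → Ω → ℝ} (hf : ∀ i ∈ s, Integrable (f i) μ) :
    Integrable (fun ω => s.sup' hs fun i => f i ω) μ := by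
  have hsup : (fun ω => s.sup' hs fun i => f i ω) = s.sup' hs f :=
    funext fun ω => (Finset.sup'_apply hs f ω).symm
  rw [hsup]
  exact Finset.sup'_induction hs f (p := fun g => Integrable g μ)
    (fun _ h₁ _ h₂ => h₁.sup h₂) hf

theorem Integrable.of_finset_sup'_abs {ι : Type*} {s : Finset ι} (hs : s.Nonempty)
    {f : ι → Ω → ℝ} (hsup : Integrable (fun ω => s.sup' hs fun i => |f i ω|) μ) {i : ι}
    (hi : i ∈ s) (hfi : AEStronglyMeasurable (f i) μ) : Integrable (f i) μ :=
  hsup.mono' hfi (ae_of_all _ fun ω => Finset.le_sup' (fun j => |f j ω|) hi)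

variable {𝒢 : Filtration ℕ m0} {τ : Ω → ℕ∞} {n : ℕ}

theorem integrable_stoppedValue_of_le {E : Type*} [NormedAddCommGroup E] {u : ℕ → Ω → E}
    (hτ : IsStoppingTime 𝒢 τ) (hτn : ∀ ω, τ ω ≤ n)
    (hu : ∀ k ≤ n, Integrable (u k) μ) : Integrable (stoppedValue u τ) μ := by
  rw [stoppedValue_eq hτn]
  exact integrable_finsetSum' _ fun k hk =>
    (hu k (Nat.lt_succ_iff.1 (Finset.mem_range.1 hk))).indicator
      (𝒢.le k _ (hτ.measurableSet_eq k))

theorem Martingale.integral_stoppedValue_eq_integral_zero [IsFiniteMeasure μ] {E : Type*}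
    [NormedAddCommGroup E] [NormedSpace ℝ E] [CompleteSpace E] {M : ℕ → Ω → E}
    (hM : Martingale M 𝒢 μ) (hτ : IsStoppingTime 𝒢 τ) (hτn : ∀ ω, τ ω ≤ n) :
    ∫ ω, stoppedValue M τ ω ∂μ = ∫ ω, M 0 ω ∂μ :=
  calc ∫ ω, stoppedValue M τ ω ∂μ = ∫ ω, (μ[M n | hτ.measurableSpace]) ω ∂μ :=
        integral_congr_ae (hM.stoppedValue_ae_eq_condExp_of_le_const hτ hτn)
    _ = ∫ ω, M n ω ∂μ := integral_condExp (hτ.measurableSpace_le_of_le hτn)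
    _ = ∫ ω, M 0 ω ∂μ := by
        simpa using (hM.setIntegral_eq (Nat.zero_le n) MeasurableSet.univ).symm

theorem integral_stoppedValue_le_integral_sup'_sub [IsFiniteMeasure μ] {Z M : ℕ → Ω → ℝ}
    (hZ : ∀ k ≤ n, Integrable (Z k) μ) (hM : Martingale M 𝒢 μ) (hM0 : M 0 = 0)
    {τ : Ω → ℕ} (hτ : IsStoppingTime 𝒢 (fun ω => (τ ω : ℕ∞))) (hτn : ∀ ω, τ ω ≤ n) :
    ∫ ω, Z (τ ω) ω ∂μ ≤ ∫ ω, (Finset.range (n + 1)).sup' Finset.nonempty_range_add_one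
      (fun k => Z k ω - M k ω) ∂μ := by
  have hτn' : ∀ ω, (τ ω : ℕ∞) ≤ n := fun ω => WithTop.coe_le_coe.2 (hτn ω)
  have hZτ := integrable_stoppedValue_of_le hτ hτn' hZ
  have hMτ := integrable_stoppedValue_of_le hτ hτn' fun k _ => hM.integrable k
  have hsup : Integrable (fun ω => (Finset.range (n + 1)).sup' Finset.nonempty_range_add_one
      (fun k => Z k ω - M k ω)) μ :=
    Integrable.finset_sup' _ fun k hk =>
      (hZ k (Nat.lt_succ_iff.1 (Finset.mem_range.1 hk))).sub (hM.integrable k)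
  calc ∫ ω, Z (τ ω) ω ∂μ
      = ∫ ω, stoppedValue Z (fun ω => (τ ω : ℕ∞)) ω
          - stoppedValue M (fun ω => (τ ω : ℕ∞)) ω ∂μ := by
        rw [integral_sub hZτ hMτ, hM.integral_stoppedValue_eq_integral_zero hτ hτn', hM0]
        simp [stoppedValue]
    _ ≤ _ := integral_mono (hZτ.sub hMτ) hsup fun ω =>
        Finset.le_sup' (fun k => Z k ω - M k ω) (Finset.mem_range.2 (Nat.lt_succ_of_le (hτn ω)))

end MeasureTheory

theorem weak_duality_bermudan_general
    {Ω : Type*} {m0 : MeasurableSpace Ω} (P : Measure Ω) [IsProbabilityMeasure P]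
    (n : ℕ)
    (𝒢 : Filtration ℕ m0)
    (Z : ℕ → Ω → ℝ)
    (hZadapted : Adapted 𝒢 Z)
    (hZint : Integrable (fun ω => (Finset.range (n + 1)).sup'
      Finset.nonempty_range_add_one (fun k => |Z k ω|)) P)
    (M : ℕ → Ω → ℝ)
    (hM : Martingale M 𝒢 P)
    (hM0 : M 0 = 0)
    (τ : Ω → ℕ)
    (hτ : IsStoppingTime 𝒢 (fun ω => (τ ω : WithTop ℕ)))
    (hτn : ∀ ω, τ ω ≤ n) :
    (∫ ω, Z (τ ω) ω ∂P ≤ ∫ ω, (Finset.range (n + 1)).sup' Finset.nonempty_range_add_one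
        (fun k => Z k ω - M k ω) ∂P) ∧
    sSup {x : ℝ | ∃ σ : Ω → ℕ, IsStoppingTime 𝒢 (fun ω => (σ ω : WithTop ℕ)) ∧ (∀ ω, σ ω ≤ n) ∧
        x = ∫ ω, Z (σ ω) ω ∂P} ≤
      sInf {y : ℝ | ∃ N : ℕ → Ω → ℝ, Martingale N 𝒢 P ∧ (∀ k, Integrable (N k) P) ∧
        N 0 = 0 ∧
        y = ∫ ω, (Finset.range (n + 1)).sup' Finset.nonempty_range_add_one
          (fun k => Z k ω - N k ω) ∂P} := by
  have hZ : ∀ k ≤ n, Integrable (Z k) P := fun k hk =>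
    hZint.of_finset_sup'_abs _ (Finset.mem_range.2 (Nat.lt_succ_of_le hk))
      ((hZadapted k).mono (𝒢.le k) le_rfl).aestronglyMeasurable
  refine ⟨integral_stoppedValue_le_integral_sup'_sub hZ hM hM0 hτ hτn,
    csSup_le ⟨_, fun _ => 0, isStoppingTime_const 𝒢 0, fun _ => Nat.zero_le n, rfl⟩ ?_⟩
  rintro _ ⟨σ, hσ, hσn, rfl⟩
  refine le_csInf ⟨_, 0, martingale_zero _ _ _, fun _ => integrable_zero _ _ _, rfl, rfl⟩ ?_
  rintro _ ⟨N, hN, -, hN0, rfl⟩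
  exact integral_stoppedValue_le_integral_sup'_sub hZ hN hN0 hσ hσn

/-- weak duality for the dual representation of Bermudan prices:
`E[Z_τ] ≤ E[max_{0≤k≤n}(Z_k − M_k)]` for every `{0,…,n}`-valued stopping time `τ` and
every integrable martingale `M` vanishing at `0`; consequently
`sup_τ E[Z_τ] ≤ inf_M E[max_{0≤k≤n}(Z_k − M_k)]`. -/
theorem weak_duality_bermudan
    {Ω : Type*} {m0 : MeasurableSpace Ω} (P : Measure Ω) [IsProbabilityMeasure P]
    (n : ℕ) (hn : 1 ≤ n)
    (𝒢 : Filtration ℕ m0)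
    (Z : ℕ → Ω → ℝ)
    (hZadapted : Adapted 𝒢 Z)
    (hZint : Integrable (fun ω => (Finset.range (n + 1)).sup'
      Finset.nonempty_range_add_one (fun k => |Z k ω|)) P)
    (M : ℕ → Ω → ℝ)
    (hM : Martingale M 𝒢 P)
    (hMint : ∀ k, Integrable (M k) P)
    (hM0 : M 0 = 0)
    (τ : Ω → ℕ)
    (hτ : IsStoppingTime 𝒢 (fun ω => (τ ω : WithTop ℕ)))
    (hτn : ∀ ω, τ ω ≤ n) :
    (∫ ω, Z (τ ω) ω ∂P ≤ ∫ ω, (Finset.range (n + 1)).sup' Finset.nonempty_range_add_one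
        (fun k => Z k ω - M k ω) ∂P) ∧
    sSup {x : ℝ | ∃ σ : Ω → ℕ, IsStoppingTime 𝒢 (fun ω => (σ ω : WithTop ℕ)) ∧ (∀ ω, σ ω ≤ n) ∧
        x = ∫ ω, Z (σ ω) ω ∂P} ≤
      sInf {y : ℝ | ∃ N : ℕ → Ω → ℝ, Martingale N 𝒢 P ∧ (∀ k, Integrable (N k) P) ∧
        N 0 = 0 ∧
        y = ∫ ω, (Finset.range (n + 1)).sup' Finset.nonempty_range_add_one
          (fun k => Z k ω - N k ω) ∂P} :=
  weak_duality_bermudan_general P n 𝒢 Z hZadapted hZint M hM hM0 τ hτ hτn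
end

section
/- (Localization of minimizers under uniform approximation.) Let F : ℝ^N → ℝ be convex, let x♯ be a minimizer of F, let Λ > 0, and suppose γ := inf{ F(x) − F(x♯) : |x − x♯| ≥ Λ } > 0. Let G : ℝ^N → ℝ be convex with sup{ |G(x) − F(x)| : |x − x♯| ≤ Λ } ≤ γ/3. Then for every x with |x − x♯| ≥ Λ one has G(x) − G(x♯) ≥ γ/3 > 0; in particular every minimizer y of G satisfies |y − x♯| < Λ. -/
/-!
Let `x` lie outside the ball of radius `Λ` about `x♯` and let `z` be the point where the segment
from `x♯` to `x` meets the sphere of radius `Λ`. On that sphere `F` exceeds `F x♯` by at least `γ`,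
and `G` is within `γ/3` of `F` at `z` and at `x♯`, so `G z - G x♯ ≥ γ/3`. Convexity of `G` along
the segment propagates this increase from `z` out to `x`.
-/

open Set

theorem ConvexOn.le_sub_of_le_sub_smul_add {E : Type*} [AddCommGroup E] [Module ℝ E]
    {s : Set E} {G : E → ℝ} (hG : ConvexOn ℝ s G) {a x : E} (ha : a ∈ s) (hx : x ∈ s)
    {t c : ℝ} (ht₀ : 0 < t) (ht₁ : t ≤ 1) (hc : 0 ≤ c) (h : c ≤ G (a + t • (x - a)) - G a) :
    c ≤ G x - G a := by
  have hz : a + t • (x - a) = (1 - t) • a + t • x := by module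
  have hchord : G (a + t • (x - a)) ≤ (1 - t) * G a + t * G x := by
    rw [hz]
    exact hG.2 ha hx (by linarith) ht₀.le (by ring)
  have hct : c ≤ t * (G x - G a) := by linarith
  have hGx : 0 ≤ G x - G a := nonneg_of_mul_nonneg_right (hc.trans hct) ht₀
  exact hct.trans (mul_le_of_le_one_left hGx ht₁)

theorem ConvexOn.le_sub_of_forall_norm_sub_eq {E : Type*} [NormedAddCommGroup E]
    [NormedSpace ℝ E] {G : E → ℝ} (hG : ConvexOn ℝ univ G) {a : E} {Λ c : ℝ} (hΛ : 0 < Λ)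
    (hc : 0 ≤ c) (hsphere : ∀ z, ‖z - a‖ = Λ → c ≤ G z - G a) {x : E} (hx : Λ ≤ ‖x - a‖) :
    c ≤ G x - G a := by
  have hxa : 0 < ‖x - a‖ := hΛ.trans_le hx
  set t := Λ / ‖x - a‖
  have ht₀ : 0 < t := div_pos hΛ hxa
  have hzΛ : ‖a + t • (x - a) - a‖ = Λ := by
    rw [add_sub_cancel_left, norm_smul, Real.norm_of_nonneg ht₀.le, div_mul_cancel₀ _ hxa.ne']
  exact hG.le_sub_of_le_sub_smul_add (mem_univ a) (mem_univ x) ht₀ ((div_le_one hxa).2 hx) hc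
    (hsphere _ hzΛ)

theorem minimizer_localization_general
    (N : ℕ)
    (F G : EuclideanSpace ℝ (Fin N) → ℝ)
    (hG : ConvexOn ℝ Set.univ G)
    (xSharp : EuclideanSpace ℝ (Fin N))
    (hmin : ∀ x, F xSharp ≤ F x)
    (Λ : ℝ) (hΛ : 0 < Λ)
    (γ : ℝ)
    (hγ : γ = sInf {y : ℝ | ∃ x : EuclideanSpace ℝ (Fin N),
      Λ ≤ ‖x - xSharp‖ ∧ y = F x - F xSharp})
    (hγpos : 0 < γ)
    (happrox : ∀ x : EuclideanSpace ℝ (Fin N), ‖x - xSharp‖ ≤ Λ → |G x - F x| ≤ γ / 3) :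
    (∀ x : EuclideanSpace ℝ (Fin N), Λ ≤ ‖x - xSharp‖ → γ / 3 ≤ G x - G xSharp) ∧
    (∀ y : EuclideanSpace ℝ (Fin N), (∀ x, G y ≤ G x) → ‖y - xSharp‖ < Λ) := by
  have hbdd : BddBelow {y : ℝ | ∃ x : EuclideanSpace ℝ (Fin N),
      Λ ≤ ‖x - xSharp‖ ∧ y = F x - F xSharp} := by
    refine ⟨0, ?_⟩
    rintro _ ⟨w, -, rfl⟩
    exact sub_nonneg.2 (hmin w)
  have hsphere : ∀ z, ‖z - xSharp‖ = Λ → γ / 3 ≤ G z - G xSharp := by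
    intro z hz
    have hFz : γ ≤ F z - F xSharp := hγ ▸ csInf_le hbdd ⟨z, hz.ge, rfl⟩
    have hGz := abs_le.1 (happrox z hz.le)
    have hGxSharp := abs_le.1 (happrox xSharp (by simpa using hΛ.le))
    linarith [hGz.1, hGxSharp.2]
  have hgrowth : ∀ x, Λ ≤ ‖x - xSharp‖ → γ / 3 ≤ G x - G xSharp :=
    fun x => hG.le_sub_of_forall_norm_sub_eq hΛ (by positivity) hsphere
  refine ⟨hgrowth, fun y hy => ?_⟩
  by_contra! hfar
  linarith [hgrowth y hfar, hy xSharp]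

/-- localization of minimizers under uniform approximation: if `F` is
convex with minimizer `x♯`, `γ := inf{F(x) − F(x♯) : |x − x♯| ≥ Λ} > 0`, and `G` is
convex with `|G − F| ≤ γ/3` on the ball `{|x − x♯| ≤ Λ}`, then `G(x) − G(x♯) ≥ γ/3 > 0`
whenever `|x − x♯| ≥ Λ`; in particular every minimizer of `G` lies in the open ball
`{|y − x♯| < Λ}`. -/
theorem minimizer_localization
    (N : ℕ) (hN : 1 ≤ N)
    (F G : EuclideanSpace ℝ (Fin N) → ℝ)
    (hF : ConvexOn ℝ Set.univ F)
    (hG : ConvexOn ℝ Set.univ G)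
    (xSharp : EuclideanSpace ℝ (Fin N))
    (hmin : ∀ x, F xSharp ≤ F x)
    (Λ : ℝ) (hΛ : 0 < Λ)
    (γ : ℝ)
    (hγ : γ = sInf {y : ℝ | ∃ x : EuclideanSpace ℝ (Fin N),
      Λ ≤ ‖x - xSharp‖ ∧ y = F x - F xSharp})
    (hγpos : 0 < γ)
    (happrox : ∀ x : EuclideanSpace ℝ (Fin N), ‖x - xSharp‖ ≤ Λ → |G x - F x| ≤ γ / 3) :
    (∀ x : EuclideanSpace ℝ (Fin N), Λ ≤ ‖x - xSharp‖ → γ / 3 ≤ G x - G xSharp) ∧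
    (∀ y : EuclideanSpace ℝ (Fin N), (∀ x, G y ≤ G x) → ‖y - xSharp‖ < Λ) :=
  minimizer_localization_general N F G hG xSharp hmin Λ hΛ γ hγ hγpos happrox
end

section
/- Let a, b ∈ ℝ with a ≠ 0 and b ≠ 0, let c ∈ ℝ, let p ≥ 1, and let P be a real polynomial of degree at most p − 1. Then the set { x ∈ ℝ : a·exp(b·x + c) = P(x) } is finite and contains at most p elements. -/
/-! Rewrite the equation as `P(x) e^{-(bx+c)} = a`. The left side has derivative
`Q(x) e^{-(bx+c)}` with `Q = P' - bP`, which is a nonzero polynomial of degree at most `deg P`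
because `b ≠ 0`. By Rolle's theorem a level set of a continuous function has at most one point
more than the zero set of its derivative, so there are at most `deg P + 1 ≤ p` solutions. -/

open Polynomial Set

theorem Set.encard_le_of_forall_finset_card_le {α : Type*} {s : Set α} {n : ℕ}
    (h : ∀ t : Finset α, ↑t ⊆ s → t.card ≤ n) : s.encard ≤ n := by
  by_contra! hlt
  obtain ⟨u, hus, hu⟩ := exists_subset_encard_eq (Order.add_one_le_of_lt hlt)
  have hfin : u.Finite := finite_of_encard_eq_coe (k := n + 1) (by simpa using hu)
  have := h hfin.toFinset (by simpa using hus)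
  rw [← hfin.coe_toFinset, encard_coe_eq_coe_finsetCard] at hu
  norm_cast at hu
  omega

-- Continuity suffices: where `f` is not differentiable, `deriv f = 0` by convention.
theorem encard_setOf_eq_le_encard_setOf_deriv_eq_zero_add_one {f : ℝ → ℝ} (hf : Continuous f)
    (y : ℝ) : {x | f x = y}.encard ≤ {x | deriv f x = 0}.encard + 1 := by
  rcases Set.finite_or_infinite {x | deriv f x = 0} with hZ | hZ
  · rw [← hZ.coe_toFinset, encard_coe_eq_coe_finsetCard]
    refine mod_cast encard_le_of_forall_finset_card_le fun s hs => ?_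
    refine Finset.card_le_of_interleaved fun u hu v hv huv _ => ?_
    obtain ⟨z, hz, hz0⟩ := exists_deriv_eq_zero huv hf.continuousOn ((hs hu).trans (hs hv).symm)
    exact ⟨z, by simpa using hz0, hz⟩
  · simp [hZ.encard_eq]

theorem Polynomial.hasDerivAt_eval_mul_exp (P : ℝ[X]) (b c x : ℝ) :
    HasDerivAt (fun x => P.eval x * Real.exp (b * x + c))
      ((derivative P + C b * P).eval x * Real.exp (b * x + c)) x := by
  have hlin : HasDerivAt (fun x => b * x + c) b x := by
    simpa using ((hasDerivAt_id x).const_mul b).add_const c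
  refine ((P.hasDerivAt x).mul hlin.exp).congr_deriv ?_
  rw [eval_add, eval_mul, eval_C]
  ring

theorem Polynomial.derivative_add_C_mul_ne_zero {P : ℝ[X]} (hP : P ≠ 0) {b : ℝ} (hb : b ≠ 0) :
    derivative P + C b * P ≠ 0 := by
  intro h
  have hdeg := degree_derivative_lt hP
  rw [eq_neg_of_add_eq_zero_left h, degree_neg, degree_C_mul hb] at hdeg
  exact hdeg.false

theorem Polynomial.encard_setOf_eval_mul_exp_eq_le {P : ℝ[X]} (hP : P ≠ 0) {b : ℝ} (hb : b ≠ 0)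
    (c a : ℝ) : {x | P.eval x * Real.exp (b * x + c) = a}.encard ≤ P.natDegree + 1 := by
  set Q := derivative P + C b * P
  have hQ : Q ≠ 0 := derivative_add_C_mul_ne_zero hP hb
  have hcrit : {x | deriv (fun x => P.eval x * Real.exp (b * x + c)) x = 0} ⊆ Q.rootSet ℝ := by
    intro x hx
    rw [mem_ofPred_eq, (P.hasDerivAt_eval_mul_exp b c x).deriv] at hx
    exact mem_rootSet.2 ⟨hQ, by simpa [Q, Real.exp_ne_zero] using hx⟩
  have hQdeg : Q.natDegree ≤ P.natDegree :=
    (natDegree_add_le _ _).trans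
      (max_le (natDegree_derivative_le P |>.trans tsub_le_self) (natDegree_C_mul_le b P))
  calc {x | P.eval x * Real.exp (b * x + c) = a}.encard
      ≤ {x | deriv (fun x => P.eval x * Real.exp (b * x + c)) x = 0}.encard + 1 :=
        encard_setOf_eq_le_encard_setOf_deriv_eq_zero_add_one (by fun_prop) a
    _ ≤ Q.natDegree + 1 := by
        gcongr
        calc _ ≤ (Q.rootSet ℝ).encard := encard_le_encard hcrit
          _ = (Q.rootSet ℝ).ncard := (rootSet_finite Q ℝ).cast_ncard_eq.symm
          _ ≤ Q.natDegree := mod_cast ncard_rootSet_le Q ℝ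
    _ ≤ P.natDegree + 1 := by gcongr

theorem Polynomial.encard_setOf_mul_exp_eq_eval_le {a b : ℝ} (ha : a ≠ 0) (hb : b ≠ 0) (c : ℝ)
    (P : ℝ[X]) :
    {x | a * Real.exp (b * x + c) = P.eval x}.encard ≤ P.natDegree + 1 := by
  rcases eq_or_ne P 0 with rfl | hP
  · simp [ha, Real.exp_ne_zero]
  have hset : {x | a * Real.exp (b * x + c) = P.eval x} =
      {x | P.eval x * Real.exp (-b * x + -c) = a} := by
    ext x
    rw [mem_ofPred_eq, mem_ofPred_eq, neg_mul, ← neg_add, Real.exp_neg,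
      mul_inv_eq_iff_eq_mul₀ (Real.exp_ne_zero _), eq_comm]
  rw [hset]
  exact encard_setOf_eval_mul_exp_eq_le hP (neg_ne_zero.2 hb) (-c) a

/-- for `a ≠ 0`, `b ≠ 0`, `p ≥ 1` and a real polynomial `P` of degree at
most `p − 1`, the set `{x ∈ ℝ : a·exp(b·x + c) = P(x)}` is finite with at most `p`
elements. -/
theorem exp_eq_polynomial_finite_roots
    (a b c : ℝ) (ha : a ≠ 0) (hb : b ≠ 0)
    (p : ℕ) (hp : 1 ≤ p)
    (P : Polynomial ℝ) (hdeg : P.natDegree ≤ p - 1) :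
    {x : ℝ | a * Real.exp (b * x + c) = Polynomial.eval x P}.Finite ∧
    {x : ℝ | a * Real.exp (b * x + c) = Polynomial.eval x P}.ncard ≤ p := by
  rw [← encard_le_coe_iff_finite_ncard_le]
  calc _ ≤ (P.natDegree + 1 : ℕ∞) := encard_setOf_mul_exp_eq_eval_le ha hb c P
    _ ≤ (p : ℕ∞) := mod_cast (by omega : P.natDegree + 1 ≤ p)
end
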